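/- Let f : R → S be a ring homomorphism. The chain map lifting problem for f has a positive solution if and only if the base change functor - ⊗_R S : K^b(R) → K^b(S) induces a fully faithful functor K^b(R)/K → K^b(S), where K is the full subcategory of complexes X in K^b(R) with X ⊗_R S ≅ 0. -/

import Mathlib

open CategoryTheory CategoryTheory.Limits CategoryTheory.Pretriangulated

universe u

/-- A bounded complex of finitely generated projective modules. -/
def IsKb {R : Type u} [CommRing R] (X : CochainComplex (ModuleCat.{u} R) ℤ) : Prop :=
  (∀ i : ℤ, Module.Finite R (X.X i) ∧ Projective (X.X i)) ∧
  ∃ m n : ℤ, ∀ i : ℤ, (i < m ∨ n < i) → IsZero (X.X i)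

/-- Objects of `K^b(R)`, viewed inside the homotopy category `K(R)`. -/
def PKb (R : Type u) [CommRing R]
    (X : HomotopyCategory (ModuleCat.{u} R) (ComplexShape.up ℤ)) : Prop :=
  IsKb X.as

/-- The class of maps of `K^b(R)` whose cone is killed by the base change functor `T'`;
`K^b(R)/K` is the Verdier quotient, i.e. the localization of `K^b(R)` at this class. -/
def bcW {R S : Type u} [CommRing R] [CommRing S]
    (T' : HomotopyCategory (ModuleCat.{u} R) (ComplexShape.up ℤ) ⥤
          HomotopyCategory (ModuleCat.{u} S) (ComplexShape.up ℤ)) :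
    MorphismProperty (ObjectProperty.FullSubcategory (PKb R)) :=
  fun X Y φ => ∃ (Z : HomotopyCategory (ModuleCat.{u} R) (ComplexShape.up ℤ))
    (g : Y.obj ⟶ Z) (h : Z ⟶ X.obj⟦(1 : ℤ)⟧),
    (Triangle.mk ((ObjectProperty.ι (PKb R)).map φ) g h ∈
      distTriang (HomotopyCategory (ModuleCat.{u} R) (ComplexShape.up ℤ))) ∧
    IsZero (T'.obj Z)

namespace Stmt19Aux

variable {R S : Type u} [CommRing R] [CommRing S]

/-- Abbreviation for the homotopy category. -/
abbrev KK (R : Type u) [CommRing R] := HomotopyCategory (ModuleCat.{u} R) (ComplexShape.up ℤ)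

lemma isKb_shift {X : CochainComplex (ModuleCat.{u} R) ℤ} (hX : IsKb X) (n : ℤ) :
    IsKb (X⟦n⟧) := by
  obtain ⟨h1, m, m', h2⟩ := hX
  exact ⟨fun i => h1 (i + n), m - n, m' - n, fun i hi => h2 (i + n) (by omega)⟩

lemma pkb_shift {A : KK R} (hA : PKb R A) (n : ℤ) : PKb R (A⟦n⟧) := by
  have e : (A⟦n⟧).as = A.as⟦n⟧ := by with_unfolding_all rfl
  show IsKb (A⟦n⟧).as
  rw [e]
  exact isKb_shift hA n

lemma isKb_mappingCone {X Y : CochainComplex (ModuleCat.{u} R) ℤ} (f : X ⟶ Y)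
    (hX : IsKb X) (hY : IsKb Y) : IsKb (CochainComplex.mappingCone f) := by
  have e : ∀ i : ℤ, (CochainComplex.mappingCone f).X i ≅ X.X (i+1) ⊞ Y.X i :=
    fun i => HomologicalComplex.homotopyCofiber.XIsoBiprod f i (i+1) rfl
  obtain ⟨hX1, mX, nX, hX2⟩ := hX
  obtain ⟨hY1, mY, nY, hY2⟩ := hY
  constructor
  · intro i
    constructor
    · haveI := (hX1 (i+1)).1
      haveI := (hY1 i).1
      haveI : Module.Finite R (↥(X.X (i+1)) × ↥(Y.X i)) := Module.Finite.prod
      have e2 : (↥(X.X (i+1)) × ↥(Y.X i)) ≃ₗ[R] (X.X (i+1) ⊞ Y.X i : ModuleCat.{u} R) :=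
        (ModuleCat.biprodIsoProd (X.X (i+1)) (Y.X i)).toLinearEquiv.symm
      haveI : Module.Finite R (X.X (i+1) ⊞ Y.X i : ModuleCat.{u} R) :=
        Module.Finite.equiv e2
      exact Module.Finite.equiv ((e i).symm.toLinearEquiv)
    · haveI := (hX1 (i+1)).2
      haveI := (hY1 i).2
      exact Projective.of_iso (e i).symm inferInstance
  · refine ⟨min (mX - 1) mY, max nX nY, fun i hi => ?_⟩
    refine IsZero.of_iso ?_ (e i)
    rw [biprod_isZero_iff]
    rcases hi with hi | hi
    · have h1 := lt_min_iff.mp hi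
      exact ⟨hX2 (i+1) (Or.inl (by omega)), hY2 i (Or.inl h1.2)⟩
    · have h1 := max_lt_iff.mp hi
      exact ⟨hX2 (i+1) (Or.inr (by omega)), hY2 i (Or.inr h1.2)⟩

/-- Cones of morphisms between objects of `K^b(R)` can be chosen in `K^b(R)`. -/
lemma exists_cone {A B : KK R} (hA : PKb R A) (hB : PKb R B) (u : A ⟶ B) :
    ∃ (Z : KK R) (_ : PKb R Z) (g : B ⟶ Z) (h : Z ⟶ A⟦(1:ℤ)⟧),
      Triangle.mk u g h ∈ distTriang (KK R) := by
  obtain ⟨f, hf⟩ :=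
    (HomotopyCategory.quotient (ModuleCat.{u} R) (ComplexShape.up ℤ)).map_surjective u
  refine ⟨(HomotopyCategory.quotient _ _).obj (CochainComplex.mappingCone f),
    isKb_mappingCone f hA hB, (CochainComplex.mappingCone.triangleh f).mor₂,
    (CochainComplex.mappingCone.triangleh f).mor₃, ?_⟩
  have heq : Triangle.mk u (CochainComplex.mappingCone.triangleh f).mor₂
      (CochainComplex.mappingCone.triangleh f).mor₃ =
        CochainComplex.mappingCone.triangleh f := by
    rw [← hf]; rfl
  exact (congrArg (fun T => T ∈ distTriang (KK R)) heq).mpr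
    (HomotopyCategory.mappingCone_triangleh_distinguished f)

lemma exists_cocone₁ {B Z : KK R} (hB : PKb R B) (hZ : PKb R Z) (g : B ⟶ Z) :
    ∃ (A : KK R) (_ : PKb R A) (f : A ⟶ B) (h : Z ⟶ A⟦(1:ℤ)⟧),
      Triangle.mk f g h ∈ distTriang (KK R) := by
  obtain ⟨W, hW, g', h', mem⟩ := exists_cone hB hZ g
  exact ⟨_, pkb_shift hW (-1), (Triangle.mk g g' h').invRotate.mor₁,
    (Triangle.mk g g' h').invRotate.mor₃, inv_rot_of_distTriang _ mem⟩

lemma exists_cocone₂ {Z X : KK R} (hZ : PKb R Z) (hX : PKb R X) (h : Z ⟶ X⟦(1:ℤ)⟧) :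
    ∃ (Y : KK R) (_ : PKb R Y) (f : X ⟶ Y) (g : Y ⟶ Z),
      Triangle.mk f g h ∈ distTriang (KK R) := by
  obtain ⟨W, hW, f', g', mem⟩ := exists_cone hZ (pkb_shift hX 1) h
  let T' := (Triangle.mk h f' g').invRotate.invRotate
  refine ⟨_, pkb_shift hW (-1), ((shiftEquiv (KK R) (1 : ℤ)).unitIso.app X).hom ≫ T'.mor₁,
    T'.mor₂,
    isomorphic_distinguished _ (inv_rot_of_distTriang _ (inv_rot_of_distTriang _ mem)) _ ?_⟩
  exact Triangle.isoMk _ _ ((shiftEquiv (KK R) (1 : ℤ)).unitIso.app X) (Iso.refl _) (Iso.refl _)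
    (by exact Category.comp_id _) (by exact (Category.comp_id _).trans (Category.id_comp _).symm)
    (by
      show h ≫ ((shiftFunctorCompIsoId (KK R) (1:ℤ) (-1) (by omega)).inv.app X)⟦(1:ℤ)⟧' =
        𝟙 _ ≫ h ≫ (shiftFunctorCompIsoId (KK R) (-1:ℤ) 1 (by omega)).inv.app _
      rw [shift_shiftFunctorCompIsoId_inv_app, Category.id_comp])

section

variable (T' : KK R ⥤ KK S) [T'.CommShift ℤ] [T'.IsTriangulated]

lemma isZero_of_dist (T : Triangle (KK R)) (hT : T ∈ distTriang (KK R))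
    (h : IsIso (T'.map T.mor₁)) : IsZero (T'.obj T.obj₃) :=
  (Triangle.isZero₃_iff_isIso₁ _ (T'.map_distinguished T hT)).2 h

lemma isIso_of_dist (T : Triangle (KK R)) (hT : T ∈ distTriang (KK R))
    (h : IsZero (T'.obj T.obj₃)) : IsIso (T'.map T.mor₁) :=
  (Triangle.isZero₃_iff_isIso₁ _ (T'.map_distinguished T hT)).1 h

lemma isZero_shift {Z : KK R} (h : IsZero (T'.obj Z)) (n : ℤ) :
    IsZero (T'.obj (Z⟦n⟧)) :=
  IsZero.of_iso ((shiftFunctor (KK S) n).map_isZero h) ((T'.commShiftIso n).app Z)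

lemma bcW_iff {X Y : ObjectProperty.FullSubcategory (PKb R)} (φ : X ⟶ Y) :
    bcW T' φ ↔ IsIso (T'.map ((ObjectProperty.ι (PKb R)).map φ)) := by
  constructor
  · rintro ⟨Z, g, h, hT, hZ⟩
    exact isIso_of_dist T' _ hT hZ
  · intro hφ
    obtain ⟨Z, g, h, hT⟩ :=
      distinguished_cocone_triangle ((ObjectProperty.ι (PKb R)).map φ)
    exact ⟨Z, g, h, hT, isZero_of_dist T' _ hT hφ⟩

instance : (bcW T').IsMultiplicative where
  id_mem X := (bcW_iff T' (𝟙 X)).2 (by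
    rw [CategoryTheory.Functor.map_id, CategoryTheory.Functor.map_id]
    infer_instance)
  comp_mem f g hf hg := (bcW_iff T' _).2 (by
    rw [bcW_iff] at hf hg
    rw [CategoryTheory.Functor.map_comp, CategoryTheory.Functor.map_comp]
    infer_instance)

instance : (bcW T').HasLeftCalculusOfFractions where
  exists_leftFraction X Y φ := by
    have hs := (bcW_iff T' φ.s).1 φ.hs
    obtain ⟨Z, hZ, g, h, H⟩ := exists_cone φ.X'.property X.property
      ((ObjectProperty.ι (PKb R)).map φ.s)
    obtain ⟨Y', hY', s', g', mem'⟩ := exists_cocone₂ hZ Y.property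
      (h ≫ ((ObjectProperty.ι (PKb R)).map φ.f)⟦(1:ℤ)⟧')
    obtain ⟨b, hb₁, _⟩ := complete_distinguished_triangle_morphism₂ _ _ H mem'
      ((ObjectProperty.ι (PKb R)).map φ.f) (𝟙 Z) (by exact (Category.id_comp _).symm)
    exact ⟨MorphismProperty.LeftFraction.mk (Y' := ⟨Y', hY'⟩) (ObjectProperty.homMk b)
      (ObjectProperty.homMk s')
      ⟨Z, g', _, mem', isZero_of_dist T' _ H hs⟩, ObjectProperty.hom_ext (PKb R) hb₁.symm⟩
  ext X' X Y f₁ f₂ s hs hf₁ := by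
    have hiso := (bcW_iff T' s).1 hs
    obtain ⟨Z, hZ, g, h, H⟩ := exists_cone X'.property X.property
      ((ObjectProperty.ι (PKb R)).map s)
    have hf₁' : ((ObjectProperty.ι (PKb R)).map s) ≫
        ((ObjectProperty.ι (PKb R)).map f₁) =
        ((ObjectProperty.ι (PKb R)).map s) ≫
        ((ObjectProperty.ι (PKb R)).map f₂) := by rw [← Functor.map_comp, ← Functor.map_comp, hf₁]
    have hsub : ((ObjectProperty.ι (PKb R)).map s) ≫
        (((ObjectProperty.ι (PKb R)).map f₁) -
          ((ObjectProperty.ι (PKb R)).map f₂)) = 0 := by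
      rw [Preadditive.comp_sub, hf₁', sub_self]
    obtain ⟨q, hq⟩ := Triangle.yoneda_exact₂ _ H _ hsub
    obtain ⟨Y', hY', r, t, mem'⟩ := exists_cone hZ Y.property q
    have h0 : IsZero (T'.obj Z) := isZero_of_dist T' _ H hiso
    refine ⟨⟨Y', hY'⟩, ObjectProperty.homMk r, ?_, ?_⟩
    · exact ⟨Z⟦(1:ℤ)⟧, (Triangle.mk q r t).rotate.mor₂, (Triangle.mk q r t).rotate.mor₃,
        rot_of_distTriang _ mem', isZero_shift T' h0 1⟩
    · apply ObjectProperty.hom_ext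
      show ((ObjectProperty.ι (PKb R)).map f₁) ≫ r =
        ((ObjectProperty.ι (PKb R)).map f₂) ≫ r
      have hz : q ≫ r = 0 := comp_distTriang_mor_zero₁₂ _ mem'
      rw [← sub_eq_zero, ← Preadditive.sub_comp, hq]
      exact (Category.assoc _ _ _).trans ((congrArg (fun z => _ ≫ z) hz).trans comp_zero)

instance : (bcW T').HasRightCalculusOfFractions where
  exists_rightFraction X Y φ := by
    have hs := (bcW_iff T' φ.s).1 φ.hs
    obtain ⟨Z, hZ, g, h, H⟩ := exists_cone Y.property φ.Y'.property
      ((ObjectProperty.ι (PKb R)).map φ.s)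
    obtain ⟨X', hX', f', h'', mem'⟩ := exists_cocone₁ X.property hZ
      (((ObjectProperty.ι (PKb R)).map φ.f) ≫ g)
    obtain ⟨a, ha₁, _⟩ := complete_distinguished_triangle_morphism₁ _ _ mem' H
      ((ObjectProperty.ι (PKb R)).map φ.f) (𝟙 Z) (by exact Category.comp_id _)
    exact ⟨MorphismProperty.RightFraction.mk (X' := ⟨X', hX'⟩) (ObjectProperty.homMk f')
      ⟨Z, _, _, mem', isZero_of_dist T' _ H hs⟩ (ObjectProperty.homMk a), ObjectProperty.hom_ext (PKb R) ha₁⟩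
  ext X Y Y' f₁ f₂ s hs hf₁ := by
    have hiso := (bcW_iff T' s).1 hs
    obtain ⟨Zc, hZc, g, h, H⟩ := exists_cone Y.property Y'.property
      ((ObjectProperty.ι (PKb R)).map s)
    have h0 : IsZero (T'.obj Zc) := isZero_of_dist T' _ H hiso
    have Hrot := inv_rot_of_distTriang _ H
    have hsub : (((ObjectProperty.ι (PKb R)).map f₁) -
        ((ObjectProperty.ι (PKb R)).map f₂)) ≫
        (Triangle.mk ((ObjectProperty.ι (PKb R)).map s) g h).invRotate.mor₂ = 0 := by
      exact (Preadditive.sub_comp _ _ _).trans (sub_eq_zero.mpr (congrArg (fun z => z.hom) hf₁))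
    obtain ⟨q, hq⟩ := Triangle.coyoneda_exact₂ _ Hrot _ hsub
    obtain ⟨X'', hX'', r, t, mem'⟩ := exists_cocone₁ X.property (pkb_shift hZc (-1)) q
    refine ⟨⟨X'', hX''⟩, ObjectProperty.homMk r, ?_, ?_⟩
    · exact ⟨Zc⟦(-1:ℤ)⟧, q, t, mem', isZero_shift T' h0 (-1)⟩
    · apply ObjectProperty.hom_ext
      show r ≫ ((ObjectProperty.ι (PKb R)).map f₁) =
        r ≫ ((ObjectProperty.ι (PKb R)).map f₂)
      have hz : r ≫ q = 0 := comp_distTriang_mor_zero₁₂ _ mem'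
      rw [← sub_eq_zero, ← Preadditive.comp_sub, hq]
      exact (Category.assoc _ _ _).symm.trans ((congrArg (fun z => z ≫ _) hz).trans zero_comp)

lemma hnat_lemma (G : (bcW T').Localization ⥤ KK S)
    (e : (bcW T').Q ⋙ G ≅ ObjectProperty.ι (PKb R) ⋙ T')
    {X Y : ObjectProperty.FullSubcategory (PKb R)} (f : X ⟶ Y) :
    G.map ((bcW T').Q.map f) =
      e.hom.app X ≫ T'.map ((ObjectProperty.ι (PKb R)).map f) ≫ e.inv.app Y := by
  have h : G.map ((bcW T').Q.map f) ≫ e.hom.app Y =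
      e.hom.app X ≫ T'.map ((ObjectProperty.ι (PKb R)).map f) := e.hom.naturality f
  rw [← Category.assoc, ← h]
  simp only [Category.assoc, Iso.hom_inv_id_app]
  exact (Category.comp_id _).symm

/-- The lifting hypothesis, reformulated internally to `K^b(R)`. -/
def Hyp (T' : KK R ⥤ KK S) : Prop :=
  ∀ (A B : ObjectProperty.FullSubcategory (PKb R)) (α : T'.obj A.obj ⟶ T'.obj B.obj),
    ∃ (A' : ObjectProperty.FullSubcategory (PKb R)) (φ : A' ⟶ A) (α' : A' ⟶ B),
      IsIso (T'.map ((ObjectProperty.ι (PKb R)).map φ)) ∧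
      T'.map ((ObjectProperty.ι (PKb R)).map φ) ≫ α =
        T'.map ((ObjectProperty.ι (PKb R)).map α')

variable [T'.Additive]

lemma exists_precomp (hlift : Hyp T') {A B : ObjectProperty.FullSubcategory (PKb R)}
    (g₁ g₂ : A ⟶ B)
    (h : T'.map ((ObjectProperty.ι (PKb R)).map g₁) =
         T'.map ((ObjectProperty.ι (PKb R)).map g₂)) :
    ∃ (A' : ObjectProperty.FullSubcategory (PKb R)) (t : A' ⟶ A), bcW T' t ∧ t ≫ g₁ = t ≫ g₂ := by
  set ι := ObjectProperty.ι (PKb R) with hι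
  have hδ : T'.map (ι.map g₁ - ι.map g₂) = 0 := by
    rw [Functor.map_sub, h, sub_self]
  obtain ⟨D, hD, w, h₃, mem⟩ := exists_cocone₁ A.property B.property (ι.map g₁ - ι.map g₂)
  have memT := T'.map_distinguished _ mem
  obtain ⟨p, hp⟩ := Triangle.coyoneda_exact₂ _ memT (𝟙 (T'.obj A.obj)) (by
    exact (Category.id_comp _).trans hδ)
  obtain ⟨A', φ, π, hiso, heq⟩ := hlift A ⟨D, hD⟩ p
  have hw : p ≫ T'.map w = 𝟙 _ := hp.symm
  refine ⟨A', ObjectProperty.homMk (ι.map π ≫ w : A'.obj ⟶ A.obj), ?_, ?_⟩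
  · refine (bcW_iff T' _).2 ?_
    show IsIso (T'.map (ι.map π ≫ w))
    rw [Functor.map_comp, ← heq]
    exact (congrArg IsIso ((Category.assoc _ _ _).trans
      ((congrArg (fun z => _ ≫ z) hw).trans (Category.comp_id _)))).mpr hiso
  · apply ObjectProperty.hom_ext
    show (ι.map π ≫ w) ≫ ι.map g₁ = (ι.map π ≫ w) ≫ ι.map g₂
    have hz : w ≫ (ι.map g₁ - ι.map g₂) = 0 := comp_distTriang_mor_zero₁₂ _ mem
    have : (ι.map π ≫ w) ≫ (ι.map g₁ - ι.map g₂) = 0 := by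
      rw [Category.assoc, hz, comp_zero]
    rw [← sub_eq_zero, ← Preadditive.comp_sub]
    exact this

lemma forward (hlift : Hyp T') :
    ∃ G : (bcW T').Localization ⥤ KK S,
      Nonempty ((bcW T').Q ⋙ G ≅ ObjectProperty.ι (PKb R) ⋙ T') ∧
      G.Full ∧ G.Faithful := by
  set ι := ObjectProperty.ι (PKb R) with hι
  set W := bcW T' with hW
  have hinv : W.IsInvertedBy (ι ⋙ T') := fun X Y f hf => (bcW_iff T' f).1 hf
  set G := Localization.lift (ι ⋙ T') hinv W.Q with hG
  have e : W.Q ⋙ G ≅ ι ⋙ T' := Localization.fac _ hinv W.Q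
  haveI := Localization.essSurj W.Q W
  have hnat : ∀ {X Y : ObjectProperty.FullSubcategory (PKb R)} (f : X ⟶ Y),
      G.map (W.Q.map f) = e.hom.app X ≫ T'.map (ι.map f) ≫ e.inv.app Y :=
    fun f => hnat_lemma T' G e f
  refine ⟨G, ⟨e⟩, ⟨?_⟩, ⟨?_⟩⟩
  · -- Full
    intro A B g
    let A₀ := W.Q.objPreimage A
    let B₀ := W.Q.objPreimage B
    let iA : W.Q.obj A₀ ≅ A := W.Q.objObjPreimageIso A
    let iB : W.Q.obj B₀ ≅ B := W.Q.objObjPreimageIso B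
    set α : T'.obj (ι.obj A₀) ⟶ T'.obj (ι.obj B₀) :=
      e.inv.app A₀ ≫ G.map iA.hom ≫ g ≫ G.map iB.inv ≫ e.hom.app B₀ with hα
    obtain ⟨A', φ, α', hiso, heq⟩ := hlift A₀ B₀ α
    haveI : IsIso (W.Q.map φ) := Localization.inverts W.Q W φ ((bcW_iff T' φ).2 hiso)
    refine ⟨iA.inv ≫ inv (W.Q.map φ) ≫ W.Q.map α' ≫ iB.hom, ?_⟩
    have key : G.map (W.Q.map α') =
        G.map (W.Q.map φ) ≫ G.map iA.hom ≫ g ≫ G.map iB.inv := by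
      rw [hnat, hnat, ← heq, hα]
      simp
      rfl
    rw [Functor.map_comp, Functor.map_comp, Functor.map_comp, key, Functor.map_inv]
    simp [← Functor.map_comp]
  · -- Faithful
    intro A B β₁ β₂ hβ
    let A₀ := W.Q.objPreimage A
    let B₀ := W.Q.objPreimage B
    let iA : W.Q.obj A₀ ≅ A := W.Q.objObjPreimageIso A
    let iB : W.Q.obj B₀ ≅ B := W.Q.objObjPreimageIso B
    set γ₁ : W.Q.obj A₀ ⟶ W.Q.obj B₀ := iA.hom ≫ β₁ ≫ iB.inv with hγ₁
    set γ₂ : W.Q.obj A₀ ⟶ W.Q.obj B₀ := iA.hom ≫ β₂ ≫ iB.inv with hγ₂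
    suffices hγ : γ₁ = γ₂ by
      have : β₁ = iA.inv ≫ γ₁ ≫ iB.hom := by simp [hγ₁]
      rw [this, hγ, hγ₂]
      simp
    have hGγ : G.map γ₁ = G.map γ₂ := by
      rw [hγ₁, hγ₂, Functor.map_comp, Functor.map_comp, Functor.map_comp, Functor.map_comp, hβ]
    obtain ⟨ρ₁, hρ₁⟩ := Localization.exists_rightFraction W.Q W γ₁
    obtain ⟨ρ₂, hρ₂⟩ := Localization.exists_rightFraction W.Q W γ₂
    obtain ⟨ψ, hψ⟩ := MorphismProperty.HasRightCalculusOfFractions.exists_rightFraction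
      (MorphismProperty.LeftFraction.mk ρ₂.s ρ₁.s ρ₁.hs)
    dsimp at hψ
    have hψf : W ψ.f := by
      refine (bcW_iff T' ψ.f).2 ?_
      have h1 : T'.map (ι.map ψ.f) ≫ T'.map (ι.map ρ₁.s) =
          T'.map (ι.map ψ.s) ≫ T'.map (ι.map ρ₂.s) := by
        rw [← Functor.map_comp, ← Functor.map_comp, ← Functor.map_comp, ← Functor.map_comp]
        exact congrArg (fun z => T'.map (ι.map z)) hψ.symm
      have h2 := (bcW_iff T' ρ₁.s).1 ρ₁.hs
      have h3 := (bcW_iff T' ρ₂.s).1 ρ₂.hs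
      have h4 := (bcW_iff T' ψ.s).1 ψ.hs
      have : T'.map (ι.map ψ.f) =
          (T'.map (ι.map ψ.s) ≫ T'.map (ι.map ρ₂.s)) ≫ inv (T'.map (ι.map ρ₁.s)) := by
        rw [← h1]
        simp
      rw [this]
      infer_instance
    have hWu : W (ψ.f ≫ ρ₁.s) := W.comp_mem _ _ hψf ρ₁.hs
    haveI : IsIso (W.Q.map (ψ.f ≫ ρ₁.s)) := Localization.inverts W.Q W _ hWu
    have e₁ : W.Q.map (ψ.f ≫ ρ₁.s) ≫ γ₁ = W.Q.map (ψ.f ≫ ρ₁.f) := by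
      rw [hρ₁, Functor.map_comp, Functor.map_comp, Category.assoc,
        MorphismProperty.RightFraction.map_s_comp_map]
    have e₂ : W.Q.map (ψ.f ≫ ρ₁.s) ≫ γ₂ = W.Q.map (ψ.s ≫ ρ₂.f) := by
      rw [show ψ.f ≫ ρ₁.s = ψ.s ≫ ρ₂.s from hψ.symm, hρ₂, Functor.map_comp, Functor.map_comp,
        Category.assoc, MorphismProperty.RightFraction.map_s_comp_map]
    have hT : T'.map (ι.map (ψ.f ≫ ρ₁.f)) = T'.map (ι.map (ψ.s ≫ ρ₂.f)) := by
      have h5 : G.map (W.Q.map (ψ.f ≫ ρ₁.f)) = G.map (W.Q.map (ψ.s ≫ ρ₂.f)) := by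
        rw [← e₁, ← e₂]
        simp only [Functor.map_comp, hGγ]
      rw [hnat, hnat] at h5
      rw [← cancel_epi (e.hom.app ψ.X'), ← cancel_mono (e.inv.app B₀)]
      simp only [Category.assoc] at h5 ⊢
      exact h5
    obtain ⟨A'', t, ht, hteq⟩ := exists_precomp T' hlift (ψ.f ≫ ρ₁.f) (ψ.s ≫ ρ₂.f) hT
    haveI : IsIso (W.Q.map t) := Localization.inverts W.Q W t ht
    have e₃ : W.Q.map (ψ.f ≫ ρ₁.f) = W.Q.map (ψ.s ≫ ρ₂.f) := by
      rw [← cancel_epi (W.Q.map t), ← Functor.map_comp, ← Functor.map_comp, hteq]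
    rw [← cancel_epi (W.Q.map (ψ.f ≫ ρ₁.s)), e₁, e₂, e₃]

lemma backward
    (h : ∃ G : (bcW T').Localization ⥤ KK S,
      Nonempty ((bcW T').Q ⋙ G ≅ ObjectProperty.ι (PKb R) ⋙ T') ∧
      G.Full ∧ G.Faithful) : Hyp T' := by
  obtain ⟨G, ⟨e⟩, hGfull, -⟩ := h
  intro A B α
  obtain ⟨β, hβ⟩ := hGfull.map_surjective (e.hom.app A ≫ α ≫ e.inv.app B)
  obtain ⟨ρ, hρ⟩ := Localization.exists_rightFraction (bcW T').Q (bcW T') β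
  have hiso := (bcW_iff T' ρ.s).1 ρ.hs
  refine ⟨ρ.X', ρ.s, ρ.f, hiso, ?_⟩
  have e₁ : (bcW T').Q.map ρ.s ≫ β = (bcW T').Q.map ρ.f := by
    rw [hρ, MorphismProperty.RightFraction.map_s_comp_map]
  have h5 : G.map ((bcW T').Q.map ρ.s) ≫ G.map β = G.map ((bcW T').Q.map ρ.f) := by
    rw [← G.map_comp, e₁]
  rw [hβ, hnat_lemma T' G e, hnat_lemma T' G e] at h5
  rw [← cancel_epi (e.hom.app ρ.X'), ← cancel_mono (e.inv.app B)]
  simp only [Category.assoc, Iso.inv_hom_id_app_assoc] at h5 ⊢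
  exact h5

end

instance mapHomotopyCategory_additive (F : ModuleCat.{u} R ⥤ ModuleCat.{u} S) [F.Additive] :
    (F.mapHomotopyCategory (ComplexShape.up ℤ)).Additive := by
  have : (HomotopyCategory.quotient (ModuleCat.{u} R) (ComplexShape.up ℤ) ⋙
      F.mapHomotopyCategory (ComplexShape.up ℤ)).Additive :=
    Functor.additive_of_iso (F.mapHomotopyCategoryFactors (ComplexShape.up ℤ)).symm
  exact Functor.additive_of_full_essSurj_comp (HomotopyCategory.quotient _ _) _

end Stmt19Aux

/-- The chain map lifting problem for `f : R → S` has a positive solution if and only if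
base change `- ⊗_R S` induces a fully faithful functor `K^b(R)/K ⥤ K(S)`, where `K` is the
subcategory of complexes killed by base change. -/
theorem stmt19 {R S : Type u} [CommRing R] [CommRing S] (f : R →+* S)
    (T : ModuleCat.{u} R ⥤ ModuleCat.{u} S)
    (hT : T = ModuleCat.extendScalars f) [T.Additive] :
    (∀ (X Y : CochainComplex (ModuleCat.{u} R) ℤ), IsKb X → IsKb Y →
      ∀ α : (T.mapHomotopyCategory (ComplexShape.up ℤ)).obj
              ((HomotopyCategory.quotient _ _).obj X) ⟶
            (T.mapHomotopyCategory (ComplexShape.up ℤ)).obj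
              ((HomotopyCategory.quotient _ _).obj Y),
        ∃ (X' : CochainComplex (ModuleCat.{u} R) ℤ) (_ : IsKb X')
          (φ : (HomotopyCategory.quotient _ _).obj X' ⟶ (HomotopyCategory.quotient _ _).obj X)
          (α' : (HomotopyCategory.quotient _ _).obj X' ⟶ (HomotopyCategory.quotient _ _).obj Y),
          IsIso ((T.mapHomotopyCategory (ComplexShape.up ℤ)).map φ) ∧
          (T.mapHomotopyCategory (ComplexShape.up ℤ)).map φ ≫ α =
            (T.mapHomotopyCategory (ComplexShape.up ℤ)).map α') ↔
    (∃ G : (bcW (T.mapHomotopyCategory (ComplexShape.up ℤ))).Localization ⥤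
        HomotopyCategory (ModuleCat.{u} S) (ComplexShape.up ℤ),
      Nonempty ((bcW (T.mapHomotopyCategory (ComplexShape.up ℤ))).Q ⋙ G ≅
        ObjectProperty.ι (PKb R) ⋙ T.mapHomotopyCategory (ComplexShape.up ℤ)) ∧
      G.Full ∧ G.Faithful) := by
  constructor
  · intro hL
    have hlift : Stmt19Aux.Hyp (T.mapHomotopyCategory (ComplexShape.up ℤ)) := by
      intro A B α
      obtain ⟨X', hX', φ, α', h1, h2⟩ := hL A.obj.as B.obj.as A.property B.property α
      exact ⟨⟨(HomotopyCategory.quotient _ _).obj X', hX'⟩, ObjectProperty.homMk φ, ObjectProperty.homMk α', h1, h2⟩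
    exact Stmt19Aux.forward _ hlift
  · intro hR
    have hlift := Stmt19Aux.backward _ hR
    intro X Y hX hY α
    obtain ⟨A', φ, α', h1, h2⟩ := hlift ⟨(HomotopyCategory.quotient _ _).obj X, hX⟩
      ⟨(HomotopyCategory.quotient _ _).obj Y, hY⟩ α
    exact ⟨A'.obj.as, A'.property, φ.hom, α'.hom, h1, h2⟩
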